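/- arXiv:0908.1414 — 2 statements merged into one kernel-verified Lean document; each statement's English description precedes it below -/
import Mathlib

section
/- Let (n_k) be a strictly increasing sequence of natural numbers such that n_{k+1} - n_k tends to infinity. Then the restriction map sending a bounded sequence a to the sequence (a(n_k))_k maps A onto ℓ^∞, i.e. for every bounded sequence b : ℕ → ℂ there exists a ∈ A (bounded with |a(n+1)-a(n)| → 0) such that a(n_k) = b(k) for all k. -/
open Filter

/-- If `n_k` is strictly increasing with `n_{k+1} - n_k → ∞`, then every bounded
sequence `b` is the restriction along `k ↦ n_k` of some element of the Higson algebra. -/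
theorem higson_restriction_surjective
    (n : ℕ → ℕ) (hmono : StrictMono n)
    (hgap : Tendsto (fun k => n (k + 1) - n k) atTop atTop)
    (b : ℕ → ℂ) (hb : ∃ C, ∀ k, ‖b k‖ ≤ C) :
    ∃ a : ℕ → ℂ,
      (∃ C, ∀ m, ‖a m‖ ≤ C) ∧
      Tendsto (fun m => ‖a (m + 1) - a m‖) atTop (nhds 0) ∧
      ∀ k, a (n k) = b k := by
  obtain ⟨C, hC⟩ := hb
  have hC0 : 0 ≤ C := le_trans (norm_nonneg _) (hC 0)
  set K : ℕ → ℕ := fun m => sSup {k | n k ≤ m} with hKdef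
  have hbdd : ∀ m, BddAbove {k | n k ≤ m} :=
    fun m => ⟨m, fun k hk => le_trans (hmono.id_le k) hk⟩
  have hmem : ∀ m, n 0 ≤ m → n (K m) ≤ m := by
    intro m hm
    have hne : {k | n k ≤ m}.Nonempty := ⟨0, hm⟩
    exact Nat.sSup_mem hne (hbdd m)
  have hle : ∀ k m, n k ≤ m → k ≤ K m := fun k m h => le_csSup (hbdd m) h
  have hempty : ∀ m, m < n 0 → K m = 0 := by
    intro m hm
    have h : {k | n k ≤ m} = ∅ := by
      ext k
      simp only [Set.mem_setOf_eq, Set.mem_empty_iff_false, iff_false]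
      intro h
      exact absurd hm (not_lt.2 (le_trans (hmono.monotone (Nat.zero_le k)) h))
    simp [hKdef, h]
  have hKlt : ∀ m, m < n (K m + 1) := by
    intro m
    by_cases hm : n 0 ≤ m
    · by_contra h
      push_neg at h
      have := hle _ m h
      omega
    · rw [hempty m (by omega)]
      calc m < n 0 := by omega
        _ ≤ n 1 := (hmono Nat.zero_lt_one).le
  have hgpos : ∀ k, n k < n (k + 1) := fun k => hmono (Nat.lt_succ_self k)
  set a : ℕ → ℂ := fun m =>
    b (K m) + ((((m - n (K m) : ℕ) : ℝ) / ((n (K m + 1) - n (K m) : ℕ) : ℝ) : ℝ) : ℂ)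
      * (b (K m + 1) - b (K m)) with hadef
  have ht01 : ∀ m, 0 ≤ (((m - n (K m) : ℕ) : ℝ) / ((n (K m + 1) - n (K m) : ℕ) : ℝ)) ∧
      (((m - n (K m) : ℕ) : ℝ) / ((n (K m + 1) - n (K m) : ℕ) : ℝ)) ≤ 1 := by
    intro m
    constructor
    · positivity
    · apply div_le_one_of_le₀
      · have h1 := hKlt m
        have h2 := hgpos (K m)
        exact_mod_cast Nat.sub_le_sub_right (by omega) (n (K m))
      · positivity
  refine ⟨a, ⟨3 * C, ?_⟩, ?_, ?_⟩
  · intro m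
    rw [hadef]
    have h1 := (ht01 m).1
    have h2 := (ht01 m).2
    calc ‖b (K m) + _ * (b (K m + 1) - b (K m))‖
        ≤ ‖b (K m)‖ + ‖_ * (b (K m + 1) - b (K m))‖ :=
          norm_add_le _ _
      _ ≤ C + 1 * (‖b (K m + 1)‖ + ‖b (K m)‖) := by
          rw [norm_mul]
          gcongr
          · exact hC _
          · rw [Complex.norm_real, Real.norm_eq_abs, abs_of_nonneg h1]; exact h2
          · exact norm_sub_le _ _
      _ ≤ 3 * C := by have := hC (K m + 1); have := hC (K m); linarith
  · -- tendsto
    have hKtend : Tendsto K atTop atTop :=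
      tendsto_atTop.mpr fun k => eventually_atTop.mpr ⟨n k, fun m hm => hle k m hm⟩
    have hgapR : Tendsto (fun k => ((n (k + 1) - n k : ℕ) : ℝ)) atTop atTop :=
      tendsto_natCast_atTop_atTop.comp hgap
    have hgap0 : Tendsto (fun k => 2 * C / ((n (k + 1) - n k : ℕ) : ℝ)) atTop (nhds 0) :=
      Tendsto.div_atTop tendsto_const_nhds hgapR
    have hbound : ∀ m, ‖a (m + 1) - a m‖
        ≤ 2 * C / ((n (K m + 1) - n (K m) : ℕ) : ℝ) := by
      intro m
      have hgR : (0 : ℝ) < ((n (K m + 1) - n (K m) : ℕ) : ℝ) := by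
        have := hgpos (K m); exact_mod_cast Nat.sub_pos_of_lt this
      have hstep : K (m + 1) = K m ∨ K (m + 1) = K m + 1 := by
        have hlow : K m ≤ K (m + 1) := by
          by_cases hm : n 0 ≤ m
          · exact hle _ _ (le_trans (hmem m hm) (Nat.le_succ m))
          · rw [hempty m (by omega)]; exact Nat.zero_le _
        have hup : K (m + 1) ≤ K m + 1 := by
          by_cases hm : n 0 ≤ m + 1
          · have h1 := hmem (m + 1) hm
            have h2 := hKlt m
            have h3 : n (K (m + 1)) < n (K m + 1 + 1) :=
              lt_of_le_of_lt h1 (lt_of_le_of_lt (by omega) (hgpos (K m + 1)))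
            have := hmono.lt_iff_lt.mp h3
            omega
          · rw [hempty (m + 1) (by omega)]; exact Nat.zero_le _
        omega
      have hbb : ‖b (K m + 1) - b (K m)‖ ≤ 2 * C := by
        calc ‖b (K m + 1) - b (K m)‖
            ≤ ‖b (K m + 1)‖ + ‖b (K m)‖ := norm_sub_le _ _
          _ ≤ 2 * C := by have := hC (K m + 1); have := hC (K m); linarith
      rcases hstep with hs | hs
      · have key : a (m + 1) - a m =
            (((((m + 1 - n (K m) : ℕ) : ℝ) - ((m - n (K m) : ℕ) : ℝ))
              / ((n (K m + 1) - n (K m) : ℕ) : ℝ) : ℝ) : ℂ) * (b (K m + 1) - b (K m)) := by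
          rw [hadef]
          simp only [hs]
          push_cast
          ring
        rw [key, norm_mul, Complex.norm_real, Real.norm_eq_abs]
        have h1 : m - n (K m) ≤ m + 1 - n (K m) := by omega
        have h2 : m + 1 - n (K m) ≤ (m - n (K m)) + 1 := by omega
        have h1' : ((m - n (K m) : ℕ) : ℝ) ≤ ((m + 1 - n (K m) : ℕ) : ℝ) := Nat.cast_le.mpr h1
        have h2' : ((m + 1 - n (K m) : ℕ) : ℝ) ≤ ((m - n (K m) : ℕ) : ℝ) + 1 := by
          have := Nat.cast_le (α := ℝ).mpr h2
          push_cast at this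
          linarith
        have hnum : |(((m + 1 - n (K m) : ℕ) : ℝ) - ((m - n (K m) : ℕ) : ℝ))| ≤ 1 := by
          rw [abs_le]; constructor <;> linarith
        calc |_ / _| * ‖b (K m + 1) - b (K m)‖
            ≤ (1 / ((n (K m + 1) - n (K m) : ℕ) : ℝ)) * (2 * C) := by
              rw [abs_div, abs_of_nonneg hgR.le]
              gcongr
          _ = 2 * C / ((n (K m + 1) - n (K m) : ℕ) : ℝ) := by ring
      · -- K (m+1) = K m + 1, so m + 1 = n (K m + 1)
        have hm1 : m + 1 = n (K m + 1) := by
          have h1 := hKlt m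
          have hne : n 0 ≤ m + 1 := by
            by_contra h
            have := hempty (m + 1) (by omega)
            omega
          have h2 := hmem (m + 1) hne
          rw [hs] at h2
          omega
        have h0 : m + 1 - n (K m + 1) = 0 := by omega
        have e1 : a (m + 1) = b (K m + 1) := by
          rw [hadef]
          simp [hs, h0]
        have hg1 : (1 : ℕ) ≤ n (K m + 1) - n (K m) := by have := hgpos (K m); omega
        have hnum : (m - n (K m) : ℕ) = (n (K m + 1) - n (K m)) - 1 := by
          have := hgpos (K m); omega
        have hgne : ((n (K m + 1) - n (K m) : ℕ) : ℝ) ≠ 0 := ne_of_gt hgR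
        have hgneC : ((n (K m + 1) - n (K m) : ℕ) : ℂ) ≠ 0 := by exact_mod_cast hgne
        have key : a (m + 1) - a m =
            (((1 : ℝ) / ((n (K m + 1) - n (K m) : ℕ) : ℝ) : ℝ) : ℂ)
              * (b (K m + 1) - b (K m)) := by
          rw [e1, hadef]
          simp only [hnum, Nat.cast_sub hg1]
          push_cast
          field_simp
          ring
        rw [key, norm_mul, Complex.norm_real, Real.norm_eq_abs, abs_of_nonneg (by positivity)]
        calc (1 / ((n (K m + 1) - n (K m) : ℕ) : ℝ)) * ‖b (K m + 1) - b (K m)‖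
            ≤ (1 / ((n (K m + 1) - n (K m) : ℕ) : ℝ)) * (2 * C) := by gcongr
          _ = 2 * C / ((n (K m + 1) - n (K m) : ℕ) : ℝ) := by ring
    exact squeeze_zero (fun m => norm_nonneg _) hbound (hgap0.comp hKtend)
  · intro k
    have hKnk : K (n k) = k := by
      have h1 : k ≤ K (n k) := hle k (n k) le_rfl
      have h2 : n (K (n k)) ≤ n k := hmem (n k) (hmono.monotone (Nat.zero_le k))
      have := hmono.le_iff_le.mp h2
      omega
    rw [hadef]
    simp [hKnk]
end

section
/- Let X be a Baire topological space, Y a metric space, and f_n : X → Y a sequence of continuous functions converging pointwise to f : X → Y. Then the set of points at which f is continuous is dense in X. -/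
open Filter

/-- Pointwise limits of continuous functions on a Baire space into a metric space are
continuous on a dense set. -/
theorem dense_continuity_points_of_pointwise_limit
    {X Y : Type*} [TopologicalSpace X] [BaireSpace X] [MetricSpace Y]
    (f : ℕ → X → Y) (hf : ∀ n, Continuous (f n))
    (g : X → Y) (hconv : ∀ x, Tendsto (fun n => f n x) atTop (nhds (g x))) :
    Dense {x | ContinuousAt g x} := by
  set F : ℕ → ℝ → Set X := fun N ε =>
    {x | ∀ m ≥ N, ∀ n ≥ N, dist (f m x) (f n x) ≤ ε} with hF
  have hFclosed : ∀ N ε, IsClosed (F N ε) := by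
    intro N ε
    have : F N ε = ⋂ m, ⋂ (_ : m ≥ N), ⋂ n, ⋂ (_ : n ≥ N),
        {x | dist (f m x) (f n x) ≤ ε} := by
      ext x; simp [hF, Set.mem_iInter]
    rw [this]
    refine isClosed_iInter fun m => isClosed_iInter fun _ =>
      isClosed_iInter fun n => isClosed_iInter fun _ => ?_
    exact isClosed_le (Continuous.dist (hf m) (hf n)) continuous_const
  have hFcover : ∀ ε > 0, (⋃ N, F N ε) = Set.univ := by
    intro ε hε
    ext x
    simp only [Set.mem_iUnion, Set.mem_univ, iff_true]
    have hc : CauchySeq (fun n => f n x) := (hconv x).cauchySeq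
    rcases Metric.cauchySeq_iff'.1 hc with _
    obtain ⟨N, hN⟩ := Metric.cauchySeq_iff.1 hc (ε/2) (by linarith)
    exact ⟨N, fun m hm n hn =>
      le_trans (le_of_lt (hN m hm n hn)) (by linarith)⟩
  have hFg : ∀ N ε, 0 ≤ ε → ∀ y ∈ F N ε, dist (f N y) (g y) ≤ ε := by
    intro N ε hε y hy
    have : Tendsto (fun m => dist (f N y) (f m y)) atTop (nhds (dist (f N y) (g y))) :=
      (tendsto_const_nhds.dist (hconv y))
    refine le_of_tendsto this ?_
    filter_upwards [eventually_ge_atTop N] with m hm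
    exact hy N le_rfl m hm
  set E : ℕ → Set X := fun k => ⋃ N, interior (F N (1 / (k + 1))) with hE
  have hEopen : ∀ k, IsOpen (E k) := fun k => isOpen_iUnion fun N => isOpen_interior
  have hEdense : ∀ k, Dense (E k) := fun k =>
    dense_iUnion_interior_of_closed (fun N => hFclosed N _)
      (hFcover _ (by positivity))
  have hdense : Dense (⋂ k, E k) := dense_iInter_of_isOpen hEopen hEdense
  refine hdense.mono fun x hx => ?_
  simp only [Set.mem_iInter] at hx
  refine Metric.tendsto_nhds.2 fun ε hε => ?_
  obtain ⟨k, hk⟩ := exists_nat_one_div_lt (show (0:ℝ) < ε/4 by linarith)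
  set δ : ℝ := 1 / (k + 1) with hδ
  have hδpos : 0 < δ := by positivity
  obtain ⟨N, hN⟩ := Set.mem_iUnion.1 (hx k)
  have hxF : x ∈ F N δ := interior_subset hN
  have hU : IsOpen (interior (F N δ) ∩ {y | dist (f N y) (f N x) < δ}) :=
    isOpen_interior.inter (isOpen_lt (Continuous.dist (hf N) continuous_const) continuous_const)
  have hxU : x ∈ interior (F N δ) ∩ {y | dist (f N y) (f N x) < δ} :=
    ⟨hN, by simp [hδpos]⟩
  filter_upwards [hU.mem_nhds hxU] with y hyU
  have h1 : dist (g y) (f N y) ≤ δ := by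
    rw [dist_comm]; exact hFg N δ hδpos.le y (interior_subset hyU.1)
  have h2 : dist (f N y) (f N x) < δ := hyU.2
  have h3 : dist (f N x) (g x) ≤ δ := hFg N δ hδpos.le x hxF
  calc dist (g y) (g x) ≤ dist (g y) (f N y) + dist (f N y) (f N x) + dist (f N x) (g x) :=
        dist_triangle4 _ _ _ _
    _ ≤ δ + δ + δ := by linarith
    _ < ε := by have := hk; simp only [hδ]; linarith
end
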